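/- arXiv:2408.10378 — 4 statements merged into one kernel-verified Lean document; each statement's English description precedes it below -/
import Mathlib

section
/- There exists a constant M₁ > 0 such that for all μ > 0 and all x ∈ [0,1], ( (1/(2μ))(sinh(2μx) − sinh(2μ(x−1))) )^{1/2} / (2 cosh(μ)) ≤ M₁. -/
/-! The numerator equals `cosh (μ (2x - 1)) · sinh μ / μ` by the sum-to-product formula. Here
`cosh (μ (2x - 1)) ≤ cosh μ` since `|2x - 1| ≤ 1`, and `sinh μ / μ ≤ cosh μ` by the mean value
theorem, so the square root is at most `cosh μ` and the quotient at most `1 / 2`. -/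

namespace Real

theorem sinh_le_mul_cosh {x : ℝ} (hx : 0 ≤ x) : sinh x ≤ x * cosh x := by
  rcases hx.eq_or_lt with rfl | hx
  · simp
  obtain ⟨c, ⟨hc₀, hcx⟩, hc⟩ := exists_hasDerivAt_eq_slope sinh cosh hx
    continuous_sinh.continuousOn fun t _ ↦ hasDerivAt_sinh t
  rw [sinh_zero, sub_zero, sub_zero, eq_div_iff hx.ne'] at hc
  have hcosh : cosh c ≤ cosh x := cosh_le_cosh.2 (by rw [abs_of_pos hc₀, abs_of_pos hx]; exact hcx.le)
  nlinarith

theorem sinh_add_sub_sinh_sub (y z : ℝ) : sinh (y + z) - sinh (y - z) = 2 * cosh y * sinh z := by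
  rw [sinh_add, sinh_sub]
  ring

theorem cosh_mul_le_cosh {t : ℝ} (ht : |t| ≤ 1) (μ : ℝ) : cosh (μ * t) ≤ cosh μ := by
  rw [cosh_le_cosh, abs_mul]
  exact mul_le_of_le_one_right (abs_nonneg μ) ht

end Real

open Real in
theorem sinh_sub_sinh_div_le_cosh_sq {μ x : ℝ} (hμ : 0 < μ) (hx : x ∈ Set.Icc (0 : ℝ) 1) :
    1 / (2 * μ) * (sinh (2 * μ * x) - sinh (2 * μ * (x - 1))) ≤ cosh μ ^ 2 := by
  have hsum : sinh (2 * μ * x) - sinh (2 * μ * (x - 1)) = 2 * cosh (μ * (2 * x - 1)) * sinh μ := by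
    rw [← sinh_add_sub_sinh_sub]
    ring_nf
  have hcosh : cosh (μ * (2 * x - 1)) ≤ cosh μ :=
    cosh_mul_le_cosh (abs_le.2 ⟨by linarith [hx.1], by linarith [hx.2]⟩) μ
  have hsinh : sinh μ ≤ μ * cosh μ := sinh_le_mul_cosh hμ.le
  have hsinh₀ : 0 ≤ sinh μ := sinh_nonneg_iff.2 hμ.le
  rw [hsum, div_mul_eq_mul_div, one_mul, div_le_iff₀ (by positivity)]
  nlinarith [mul_le_mul_of_nonneg_right hcosh hsinh₀, cosh_pos μ]

theorem uniform_bound_M1 :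
    ∃ M₁ : ℝ, 0 < M₁ ∧ ∀ μ : ℝ, 0 < μ → ∀ x ∈ Set.Icc (0 : ℝ) 1,
      Real.sqrt ((1 / (2 * μ)) * (Real.sinh (2 * μ * x) - Real.sinh (2 * μ * (x - 1)))) /
        (2 * Real.cosh μ) ≤ M₁ := by
  refine ⟨1 / 2, one_half_pos, fun μ hμ x hx ↦ ?_⟩
  have hcosh := Real.cosh_pos μ
  have hsqrt : Real.sqrt (1 / (2 * μ) * (Real.sinh (2 * μ * x) - Real.sinh (2 * μ * (x - 1))))
      ≤ Real.cosh μ :=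
    (Real.sqrt_le_left hcosh.le).2 (sinh_sub_sinh_div_le_cosh_sq hμ hx)
  rw [div_le_iff₀ (by positivity)]
  linarith
end

section
/- Let v : [0,1] → ℝ be a W^{1,p} function with v(0) = 0, and let p, q ∈ (1, ∞) and δ ∈ (0,1) satisfy δ(1/q + 1 − 1/p) = 1/q. Then ‖v‖_{L^∞(0,1)} ≤ δ^{−δ} ‖v'‖_{L^p(0,1)}^δ ‖v‖_{L^q(0,1)}^{1−δ}. -/
/-!
Put `s = 1/δ > 1`. Since `v(0) = 0`, the fundamental theorem of calculus applied to `|v|^s` gives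
`|v(y)|^s ≤ s ∫₀¹ |v|^(s-1) |v'|`, and Hölder's inequality with exponents `p' = p/(p-1)` and `p`
bounds this by `s ‖v‖_q^(s-1) ‖v'‖_p`, because the relation between `p`, `q` and `δ` says exactly
that `(s - 1) p' = q`. Taking the power `δ` gives the claim, with constant `s^δ = δ^(-δ)`.
-/

open Set MeasureTheory

theorem sub_one_mul_conjExponent_eq {p q δ : ℝ} (hp : 1 < p) (hδ : δ ≠ 0)
    (hpq : δ * (1 / q + 1 - 1 / p) = 1 / q) : (δ⁻¹ - 1) * p.conjExponent = q := by
  have hq : q ≠ 0 := by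
    rintro rfl
    have : 1 / p < 1 := (div_lt_one (by linarith)).2 hp
    simp only [div_zero, zero_add, mul_eq_zero] at hpq
    exact hpq.elim hδ fun h => by linarith
  have hp1 : p - 1 ≠ 0 := by linarith
  rw [Real.conjExponent]
  field_simp at hpq ⊢
  linarith

theorem aestronglyMeasurable_restrict_of_hasDerivAt {μ : Measure ℝ} {f f' : ℝ → ℝ} {s : Set ℝ}
    (hs : MeasurableSet s) (hf : ∀ x ∈ s, HasDerivAt f (f' x) x) :
    AEStronglyMeasurable f' (μ.restrict s) :=
  (measurable_deriv f).aestronglyMeasurable.congr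
    ((ae_restrict_mem hs).mono fun x hx => (hf x hx).deriv)

theorem memLp_of_integrable_abs_rpow {α : Type*} [MeasurableSpace α] {μ : Measure α}
    {f : α → ℝ} {p : ℝ} (hp : 0 < p) (hf : AEStronglyMeasurable f μ)
    (hint : Integrable (fun x => |f x| ^ p) μ) : MemLp f (ENNReal.ofReal p) μ := by
  rw [← integrable_norm_rpow_iff hf (by simpa using hp) ENNReal.ofReal_ne_top,
    ENNReal.toReal_ofReal hp.le]
  simpa only [Real.norm_eq_abs] using hint

theorem ContinuousOn.memLp_restrict {X E : Type*} [TopologicalSpace X] [T2Space X]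
    [MeasurableSpace X] [OpensMeasurableSpace X] [NormedAddCommGroup E] {μ : Measure X}
    [IsFiniteMeasureOnCompacts μ] {f : X → E} {K : Set X} (hf : ContinuousOn f K)
    (hK : IsCompact K) (p : ENNReal) : MemLp f p (μ.restrict K) := by
  have : IsFiniteMeasure (μ.restrict K) := isFiniteMeasure_restrict.2 hK.measure_lt_top.ne
  obtain ⟨C, hC⟩ := hK.exists_bound_of_continuousOn hf
  exact .of_bound (hf.aestronglyMeasurable_of_isCompact hK hK.measurableSet) C
    (ae_restrict_of_forall_mem hK.measurableSet hC)

theorem integral_abs_rpow_mul_abs_le {α : Type*} [MeasurableSpace α] {μ : Measure α}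
    {f g : α → ℝ} {p p' q r : ℝ} (hpp' : p'.HolderConjugate p) (hq : q ≠ 0) (hr : r * p' = q)
    (hf : MemLp (fun x => |f x| ^ r) (ENNReal.ofReal p') μ) (hg : MemLp g (ENNReal.ofReal p) μ) :
    ∫ x, |f x| ^ r * |g x| ∂μ ≤
      ((∫ x, |f x| ^ q ∂μ) ^ (1 / q)) ^ r * (∫ x, |g x| ^ p ∂μ) ^ (1 / p) := by
  have h := integral_mul_le_Lp_mul_Lq_of_nonneg hpp'
    (ae_of_all _ fun x => Real.rpow_nonneg (abs_nonneg (f x)) r)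
    (ae_of_all _ fun x => abs_nonneg (g x)) hf (by simpa only [Real.norm_eq_abs] using hg.norm)
  simp only [← Real.rpow_mul (abs_nonneg _), hr] at h
  have hexp : 1 / q * r = 1 / p' := by
    rw [← hr, one_div_mul_eq_div, div_mul_cancel_left₀ (left_ne_zero_of_mul (hr ▸ hq)), one_div]
  rwa [← Real.rpow_mul (integral_nonneg fun x => Real.rpow_nonneg (abs_nonneg (f x)) q), hexp]

theorem abs_rpow_le_setIntegral {f f' : ℝ → ℝ} {a b y s : ℝ} (hy : y ∈ Icc a b) (hs : 1 < s)
    (hf : ContinuousOn f (Icc a b)) (hderiv : ∀ x ∈ Ioo a b, HasDerivAt f (f' x) x)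
    (hf' : IntegrableOn f' (Icc a b)) (ha : f a = 0) :
    |f y| ^ s ≤ s * ∫ x in Icc a b, |f x| ^ (s - 1) * |f' x| := by
  have hφ : IntegrableOn (fun x => |f x| ^ (s - 1) * |f' x|) (Icc a b) :=
    IntegrableOn.continuousOn_mul (hf.abs.rpow_const fun _ _ => Or.inr (by linarith))
      hf'.norm isCompact_Icc
  have hpow (u : ℝ) : |u| ^ (s - 2) * |u| = |u| ^ (s - 1) := by
    rw [← Real.rpow_add_one' (abs_nonneg u) (by linarith)]
    ring_nf
  have hsub : Icc a y ⊆ Icc a b := Icc_subset_Icc_right hy.2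
  have hFTC : |f y| ^ s - |f a| ^ s ≤ ∫ x in a..y, s * (|f x| ^ (s - 1) * |f' x|) := by
    refine intervalIntegral.sub_le_integral_of_hasDeriv_right_of_le hy.1
      ((hf.mono hsub).abs.rpow_const fun _ _ => Or.inr (by linarith))
      (fun x hx => ((hasDerivAt_abs_rpow (f x) hs).comp x
        (hderiv x ⟨hx.1, hx.2.trans_le hy.2⟩)).hasDerivWithinAt)
      ((hφ.mono_set hsub).const_mul s) fun x _ => ?_
    calc s * |f x| ^ (s - 2) * f x * f' x ≤ |s * |f x| ^ (s - 2) * f x * f' x| := le_abs_self _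
      _ = s * (|f x| ^ (s - 1) * |f' x|) := by
        rw [abs_mul, abs_mul, abs_mul, abs_of_pos (by linarith : 0 < s),
          abs_of_nonneg (Real.rpow_nonneg (abs_nonneg _) _), ← hpow]
        ring
  rw [ha, abs_zero, Real.zero_rpow (by linarith), sub_zero, intervalIntegral.integral_const_mul,
    intervalIntegral.integral_of_le hy.1] at hFTC
  refine hFTC.trans (mul_le_mul_of_nonneg_left (setIntegral_mono_set hφ ?_ ?_) (by linarith))
  · exact ae_of_all _ fun x => mul_nonneg (Real.rpow_nonneg (abs_nonneg _) _) (abs_nonneg _)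
  · exact (Ioc_subset_Icc_self.trans hsub).eventuallyLE

theorem le_mul_rpow_of_rpow_inv_le {x A B δ : ℝ} (hx : 0 ≤ x) (hA : 0 ≤ A) (hB : 0 ≤ B)
    (hδ : 0 < δ) (h : x ^ δ⁻¹ ≤ δ⁻¹ * (B ^ (δ⁻¹ - 1) * A)) :
    x ≤ δ ^ (-δ) * A ^ δ * B ^ (1 - δ) := by
  calc x = (x ^ δ⁻¹) ^ δ := by rw [← Real.rpow_mul hx, inv_mul_cancel₀ hδ.ne', Real.rpow_one]
    _ ≤ (δ⁻¹ * (B ^ (δ⁻¹ - 1) * A)) ^ δ := by gcongr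
    _ = δ ^ (-δ) * A ^ δ * B ^ (1 - δ) := by
      rw [Real.mul_rpow (by positivity) (by positivity), Real.mul_rpow (by positivity) hA,
        Real.inv_rpow hδ.le, ← Real.rpow_neg hδ.le, ← Real.rpow_mul hB, sub_mul,
        inv_mul_cancel₀ hδ.ne', one_mul]
      ring

theorem interpolation_Linfty_general (v v' : ℝ → ℝ) (p q δ : ℝ)
    (hp : 1 < p) (hδ : δ ∈ Set.Ioo (0 : ℝ) 1)
    (hpq : δ * (1 / q + 1 - 1 / p) = 1 / q)
    (hderiv : ∀ y ∈ Set.Icc (0 : ℝ) 1, HasDerivAt v (v' y) y)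
    (hv'int : IntervalIntegrable (fun y => |v' y| ^ p) volume 0 1)
    (hv0 : v 0 = 0) :
    ∀ y ∈ Set.Icc (0 : ℝ) 1,
      |v y| ≤ δ ^ (-δ) * ((∫ y in (0:ℝ)..1, |v' y| ^ p) ^ (1 / p)) ^ δ *
        ((∫ y in (0:ℝ)..1, |v y| ^ q) ^ (1 / q)) ^ (1 - δ) := by
  intro y hy
  obtain ⟨hδ0, hδ1⟩ := hδ
  have hs : 1 < δ⁻¹ := (one_lt_inv₀ hδ0).2 hδ1
  have hconj : p.HolderConjugate p.conjExponent := .conjExponent hp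
  have hexp := sub_one_mul_conjExponent_eq hp hδ0.ne' hpq
  have hq : 0 < q := hexp ▸ mul_pos (sub_pos.2 hs) hconj.symm.pos
  have hv : ContinuousOn v (Icc 0 1) := fun x hx => (hderiv x hx).continuousAt.continuousWithinAt
  have hv' : MemLp v' (ENNReal.ofReal p) (volume.restrict (Icc 0 1)) :=
    memLp_of_integrable_abs_rpow (by linarith)
      (aestronglyMeasurable_restrict_of_hasDerivAt measurableSet_Icc hderiv)
      ((intervalIntegrable_iff_integrableOn_Icc_of_le zero_le_one).1 hv'int)
  have hvpow : MemLp (fun x => |v x| ^ (δ⁻¹ - 1)) (ENNReal.ofReal p.conjExponent)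
      (volume.restrict (Icc 0 1)) :=
    (hv.abs.rpow_const fun _ _ => Or.inr (by linarith)).memLp_restrict isCompact_Icc _
  have hFTC := abs_rpow_le_setIntegral hy hs hv (fun x hx => hderiv x (Ioo_subset_Icc_self hx))
    (hv'.integrable (by simpa using hp.le)) hv0
  have hHolder := integral_abs_rpow_mul_abs_le hconj.symm hq.ne' hexp hvpow hv'
  simp only [intervalIntegral.integral_of_le zero_le_one, ← integral_Icc_eq_integral_Ioc]
  exact le_mul_rpow_of_rpow_inv_le (abs_nonneg _) (by positivity) (by positivity) hδ0
    (hFTC.trans (mul_le_mul_of_nonneg_left hHolder (by positivity)))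

theorem interpolation_Linfty (v v' : ℝ → ℝ) (p q δ : ℝ)
    (hp : 1 < p) (hq : 1 < q) (hδ : δ ∈ Set.Ioo (0 : ℝ) 1)
    (hpq : δ * (1 / q + 1 - 1 / p) = 1 / q)
    (hderiv : ∀ y ∈ Set.Icc (0 : ℝ) 1, HasDerivAt v (v' y) y)
    (hv'int : IntervalIntegrable (fun y => |v' y| ^ p) volume 0 1)
    (hv0 : v 0 = 0) :
    ∀ y ∈ Set.Icc (0 : ℝ) 1,
      |v y| ≤ δ ^ (-δ) * ((∫ y in (0:ℝ)..1, |v' y| ^ p) ^ (1 / p)) ^ δ *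
        ((∫ y in (0:ℝ)..1, |v y| ^ q) ^ (1 / q)) ^ (1 - δ) :=
  interpolation_Linfty_general v v' p q δ hp hδ hpq hderiv hv'int hv0
end

section
/- Let v : [0,1] → ℝ be a W^{1,2} function with v(0) = 0 and let r ∈ (0,1). Then for every ε > 0, ‖v‖_{L^2(0,1)}^{(3+r)/2} ≤ ((3+r)ε/2)·‖v'‖_{L^2(0,1)}² + ((3+r)/(8ε))·‖v‖_{L^{1+r}(0,1)}^{1+r}. -/
/-!
Let `p = (3 + r) / 2 > 1` and let `|v|` attain its maximum `M` on `[0, 1]` at `y₀`. Then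
`‖v‖₂ ≤ M`, and since `v 0 = 0`, `M ^ p = |v y₀| ^ p` is the integral over `[0, y₀]` of
`(|v| ^ p)' = p |v| ^ (p - 2) v v' ≤ p |v| ^ (p - 1) |v'|`. Young's inequality
`ab ≤ ε b² + a² / (4ε)` with `a = |v| ^ (p - 1)`, `b = |v'|` bounds this by
`p (ε v'² + |v| ^ (1 + r) / (4ε))`, because `2 (p - 1) = 1 + r`.
-/

open Set MeasureTheory

lemma mul_le_mul_sq_add_sq_div {ε : ℝ} (hε : 0 < ε) (a b : ℝ) :
    a * b ≤ ε * b ^ 2 + a ^ 2 / (4 * ε) := by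
  have hsq : 0 ≤ (2 * ε * b - a) ^ 2 / (4 * ε) := by positivity
  have hexpand : (2 * ε * b - a) ^ 2 / (4 * ε) = ε * b ^ 2 + a ^ 2 / (4 * ε) - a * b := by
    field_simp
    ring
  linarith

lemma mul_abs_rpow_sub_two_mul_mul_le {p : ℝ} (hp : 1 < p) (x y : ℝ) :
    p * |x| ^ (p - 2) * x * y ≤ p * |x| ^ (p - 1) * |y| := by
  have hpow : |x| ^ (p - 2) * |x| = |x| ^ (p - 1) := by
    rw [← Real.rpow_add_one' (abs_nonneg x) (by linarith)]
    ring_nf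
  calc p * |x| ^ (p - 2) * x * y ≤ |p * |x| ^ (p - 2) * x * y| := le_abs_self _
    _ = p * (|x| ^ (p - 2) * |x|) * |y| := by
      rw [abs_mul, abs_mul, abs_mul, abs_of_pos (by linarith),
        abs_of_nonneg (Real.rpow_nonneg (abs_nonneg x) _)]
      ring
    _ = p * |x| ^ (p - 1) * |y| := by rw [hpow]

lemma abs_rpow_le_integral_of_hasDerivAt {f f' φ : ℝ → ℝ} {a b p : ℝ} (hp : 1 < p)
    (hab : a ≤ b) (hf : ∀ x ∈ Icc a b, HasDerivAt f (f' x) x) (ha : f a = 0)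
    (hφ : IntervalIntegrable φ volume a b) (hφf : ∀ x ∈ Ioo a b, p * |f x| ^ (p - 1) * |f' x| ≤ φ x) :
    |f b| ^ p ≤ ∫ x in a..b, φ x := by
  have hderiv : ∀ x ∈ Icc a b,
      HasDerivAt (fun x => |f x| ^ p) (p * |f x| ^ (p - 2) * f x * f' x) x :=
    fun x hx => (hasDerivAt_abs_rpow (f x) hp).comp x (hf x hx)
  have h := intervalIntegral.sub_le_integral_of_hasDeriv_right_of_le hab
    (fun x hx => (hderiv x hx).continuousAt.continuousWithinAt)
    (fun x hx => (hderiv x (Ioo_subset_Icc_self hx)).hasDerivWithinAt)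
    ((intervalIntegrable_iff_integrableOn_Icc_of_le hab).1 hφ)
    (fun x hx => (mul_abs_rpow_sub_two_mul_mul_le hp _ _).trans (hφf x hx))
  rwa [ha, abs_zero, Real.zero_rpow (by linarith), sub_zero] at h

lemma sqrt_integral_sq_le_of_abs_le {f : ℝ → ℝ} {M : ℝ} (hM : ∀ x ∈ Ioc (0 : ℝ) 1, |f x| ≤ M) :
    √(∫ x in (0 : ℝ)..1, f x ^ 2) ≤ M := by
  have hM0 : 0 ≤ M := (abs_nonneg _).trans (hM 1 ⟨one_pos, le_rfl⟩)
  have hint : ∫ x in (0 : ℝ)..1, f x ^ 2 ≤ M ^ 2 := by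
    have h := intervalIntegral.norm_integral_le_of_norm_le_const (a := 0) (b := 1)
      (f := fun x => f x ^ 2) (C := M ^ 2) fun x hx => by
        rw [uIoc_of_le zero_le_one] at hx
        rw [Real.norm_eq_abs, abs_pow]
        exact pow_le_pow_left₀ (abs_nonneg _) (hM x hx) 2
    simpa using (le_abs_self _).trans h
  exact (Real.sqrt_le_sqrt hint).trans_eq (Real.sqrt_sq hM0)

theorem interpolation_with_eps (v v' : ℝ → ℝ) (r : ℝ) (hr : r ∈ Set.Ioo (0 : ℝ) 1)
    (hderiv : ∀ y ∈ Set.Icc (0 : ℝ) 1, HasDerivAt v (v' y) y)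
    (hv'int : IntervalIntegrable (fun y => (v' y) ^ 2) volume 0 1)
    (hv0 : v 0 = 0) :
    ∀ ε : ℝ, 0 < ε →
      (Real.sqrt (∫ y in (0:ℝ)..1, (v y) ^ 2)) ^ ((3 + r) / 2) ≤
        ((3 + r) * ε / 2) * (∫ y in (0:ℝ)..1, (v' y) ^ 2) +
          ((3 + r) / (8 * ε)) * (∫ y in (0:ℝ)..1, |v y| ^ (1 + r)) := by
  intro ε hε
  have hr0 : 0 < r := hr.1
  set p := (3 + r) / 2 with hp_def
  have hp : 1 < p := by linarith
  have hv : ContinuousOn v (Icc 0 1) := fun y hy => (hderiv y hy).continuousAt.continuousWithinAt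
  obtain ⟨y₀, hy₀, hmax⟩ := isCompact_Icc.exists_isMaxOn (nonempty_Icc.2 zero_le_one) hv.abs
  set g := fun y => (p * ε) * v' y ^ 2 + (p / (4 * ε)) * |v y| ^ (1 + r) with hg_def
  have hvr : IntervalIntegrable (fun y => |v y| ^ (1 + r)) volume 0 1 :=
    (hv.abs.rpow_const fun _ _ => Or.inr (by linarith)).intervalIntegrable_of_Icc zero_le_one
  have hg : IntervalIntegrable g volume 0 1 := (hv'int.const_mul _).add (hvr.const_mul _)
  have young : ∀ y, p * |v y| ^ (p - 1) * |v' y| ≤ g y := fun y => by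
    have hsq : (|v y| ^ (p - 1)) ^ 2 = |v y| ^ (1 + r) := by
      rw [← Real.rpow_natCast, ← Real.rpow_mul (abs_nonneg _), hp_def]
      ring_nf
    calc p * |v y| ^ (p - 1) * |v' y| = p * (|v y| ^ (p - 1) * |v' y|) := by ring
      _ ≤ p * (ε * |v' y| ^ 2 + (|v y| ^ (p - 1)) ^ 2 / (4 * ε)) := by
        gcongr
        exact mul_le_mul_sq_add_sq_div hε _ _
      _ = g y := by rw [sq_abs, hsq, hg_def]; ring
  calc √(∫ y in (0:ℝ)..1, v y ^ 2) ^ p ≤ |v y₀| ^ p :=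
        Real.rpow_le_rpow (Real.sqrt_nonneg _)
          (sqrt_integral_sq_le_of_abs_le fun x hx => hmax (Ioc_subset_Icc_self hx)) (by linarith)
    _ ≤ ∫ y in (0:ℝ)..y₀, g y :=
        abs_rpow_le_integral_of_hasDerivAt hp hy₀.1
          (fun x hx => hderiv x ⟨hx.1, hx.2.trans hy₀.2⟩) hv0
          (hg.mono_set (uIcc_subset_uIcc_left (by simp [uIcc_of_le, hy₀.1, hy₀.2]))) fun x _ => young x
    _ ≤ ∫ y in (0:ℝ)..1, g y :=
        intervalIntegral.integral_mono_interval le_rfl hy₀.1 hy₀.2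
          (Filter.Eventually.of_forall fun y => (by positivity : 0 ≤ g y)) hg
    _ = _ := by
      rw [intervalIntegral.integral_add (hv'int.const_mul _) (hvr.const_mul _),
        intervalIntegral.integral_const_mul, intervalIntegral.integral_const_mul, hp_def]
      ring
end

section
/- Let k > 0, r ∈ (0,1). For any w ∈ H²(0,1) with w(0)=0, w'(1)=0, any f ∈ L²(0,1), and any ε with 0 < ε < 1/(2√k), the following holds: 2∫₀¹ w'' w dy + 2⟨−k|w|^{r−1}w + f, w⟩_{L²} ≤ −(16kε/(3+r))·‖w‖_{L²(0,1)}^{(3+r)/2} + 2‖f‖_{L²(0,1)}‖w‖_{L²(0,1)}. -/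
/-!
Integrating by parts, the diffusion term equals `-2‖w'‖²`, and the reaction term equals
`-2k‖w‖_{1+r}^{1+r} + 2⟨f, w⟩` with `⟨f, w⟩ ≤ ‖f‖‖w‖`. For `p = (3+r)/2 > 1` the function `|w|^p`
is `C¹` with `|(|w|^p)'| ≤ p|w|^{p-1}|w'|`, so `w(0) = 0` and Cauchy–Schwarz give
`‖w‖₂^p ≤ sup |w|^p ≤ p ‖w‖_{1+r}^{(1+r)/2} ‖w'‖₂`, as `2(p-1) = 1+r`. Young's inequality
`4kε·bc ≤ b² + kc²`, valid because `4kε² < 1`, then absorbs `(16kε/(3+r))‖w‖₂^p` into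
`2‖w'‖² + 2k‖w‖_{1+r}^{1+r}`.
-/

open Set MeasureTheory

theorem abs_rpow_sub_one_mul_self_mul_self {s : ℝ} (hs : s + 1 ≠ 0) (x : ℝ) :
    |x| ^ (s - 1) * x * x = |x| ^ (s + 1) := by
  rw [mul_assoc, ← sq, ← sq_abs, ← Real.rpow_two,
    ← Real.rpow_add' (abs_nonneg x) (by convert hs using 1; ring)]
  ring_nf

theorem abs_rpow_sub_two_mul_self_mul_le {p : ℝ} (hp : 1 < p) (x v : ℝ) :
    |x| ^ (p - 2) * x * v ≤ |x| ^ (p - 1) * |v| := by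
  have h : |x| ^ (p - 1) = |x| ^ (p - 2) * |x| := by
    rw [← Real.rpow_add_one' (abs_nonneg x) (by linarith)]
    ring_nf
  rw [h, mul_assoc, mul_assoc, ← abs_mul]
  exact mul_le_mul_of_nonneg_left (le_abs_self _) (Real.rpow_nonneg (abs_nonneg x) _)

theorem four_mul_mul_sq_lt_one {k ε : ℝ} (hk : 0 < k) (hε : 0 ≤ ε)
    (hε' : ε < 1 / (2 * √k)) : 4 * k * ε ^ 2 < 1 := by
  have h : ε * (2 * √k) < 1 := (lt_div_iff₀ (by positivity)).1 hε'
  calc 4 * k * ε ^ 2 = (ε * (2 * √k)) ^ 2 := by rw [mul_pow, mul_pow, Real.sq_sqrt hk.le]; ring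
    _ < 1 := pow_lt_one₀ (by positivity) h two_ne_zero

theorem four_mul_mul_mul_le_sq_add {k ε : ℝ} (hk : 0 ≤ k) (hkε : 4 * k * ε ^ 2 ≤ 1) (b c : ℝ) :
    4 * k * ε * b * c ≤ b ^ 2 + k * c ^ 2 := by
  nlinarith [sq_nonneg (b - 2 * k * ε * c),
    mul_nonneg (mul_nonneg hk (sq_nonneg c)) (sub_nonneg.2 hkε)]

theorem integral_mul_le_sqrt_mul_sqrt {α : Type*} [MeasurableSpace α] {μ : Measure α}
    {f g : α → ℝ} (hf : MemLp f 2 μ) (hg : MemLp g 2 μ) :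
    ∫ x, f x * g x ∂μ ≤ √(∫ x, f x ^ 2 ∂μ) * √(∫ x, g x ^ 2 ∂μ) := by
  have habs := integral_mul_le_Lp_mul_Lq_of_nonneg Real.HolderConjugate.two_two
    (Filter.Eventually.of_forall fun x => abs_nonneg (f x))
    (Filter.Eventually.of_forall fun x => abs_nonneg (g x))
    (by rw [ENNReal.ofReal_ofNat]; exact hf.abs) (by rw [ENNReal.ofReal_ofNat]; exact hg.abs)
  simp only [Real.rpow_two, sq_abs, ← Real.sqrt_eq_rpow] at habs
  refine le_trans (integral_mono (hf.integrable_mul hg) ?_ fun x => ?_) habs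
  · exact hf.abs.integrable_mul hg.abs
  · simpa [abs_mul] using le_abs_self (f x * g x)

theorem intervalIntegral.integral_mul_le_sqrt_mul_sqrt {a b : ℝ} (hab : a ≤ b) {f g : ℝ → ℝ}
    (hf : MemLp f 2 (volume.restrict (Ioc a b))) (hg : MemLp g 2 (volume.restrict (Ioc a b))) :
    ∫ x in a..b, f x * g x ≤ √(∫ x in a..b, f x ^ 2) * √(∫ x in a..b, g x ^ 2) := by
  simpa only [intervalIntegral.integral_of_le hab] using _root_.integral_mul_le_sqrt_mul_sqrt hf hg

theorem ContinuousOn.memLp_two_restrict_Ioc {a b : ℝ} {g : ℝ → ℝ} (hg : ContinuousOn g (Icc a b)) :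
    MemLp g 2 (volume.restrict (Ioc a b)) :=
  (memLp_two_iff_integrable_sq ((hg.mono Ioc_subset_Icc_self).aestronglyMeasurable
    measurableSet_Ioc)).2 ((hg.pow 2).integrableOn_Icc.mono_set Ioc_subset_Icc_self)

theorem integral_deriv_deriv_mul_eq_neg_integral_sq {a b : ℝ} (hab : a ≤ b) {w w' w'' : ℝ → ℝ}
    (hw : ∀ x ∈ Icc a b, HasDerivAt w (w' x) x) (hw' : ∀ x ∈ Icc a b, HasDerivAt w' (w'' x) x)
    (hw'' : IntervalIntegrable w'' volume a b) (ha : w a = 0) (hb : w' b = 0) :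
    ∫ x in a..b, w'' x * w x = -∫ x in a..b, w' x ^ 2 := by
  have h := intervalIntegral.integral_mul_deriv_eq_deriv_mul
    (fun x hx => hw' x (by rwa [uIcc_of_le hab] at hx))
    (fun x hx => hw x (by rwa [uIcc_of_le hab] at hx)) hw''
    ((HasDerivAt.continuousOn hw').intervalIntegrable_of_Icc hab)
  simp only [ha, hb, mul_zero, zero_mul, sub_zero, zero_sub, ← sq] at h
  linarith

theorem integral_reaction_mul_eq {a b k r : ℝ} (hab : a ≤ b) (hr : 0 < 1 + r) {w f : ℝ → ℝ}
    (hw : ContinuousOn w (Icc a b)) (hf : MemLp f 2 (volume.restrict (Ioc a b))) :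
    ∫ y in a..b, (-k * |w y| ^ (r - 1) * w y + f y) * w y
      = (∫ y in a..b, f y * w y) - k * ∫ y in a..b, |w y| ^ (1 + r) := by
  have hfw : IntervalIntegrable (fun y => f y * w y) volume a b :=
    (intervalIntegrable_iff_integrableOn_Ioc_of_le hab).2
      (hf.integrable_mul hw.memLp_two_restrict_Ioc)
  have hwr : IntervalIntegrable (fun y => |w y| ^ (1 + r)) volume a b :=
    (hw.abs.rpow_const fun _ _ => Or.inr hr.le).intervalIntegrable_of_Icc hab
  rw [← intervalIntegral.integral_const_mul, ← intervalIntegral.integral_sub hfw (hwr.const_mul k)]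
  refine intervalIntegral.integral_congr fun y _ => ?_
  have h := abs_rpow_sub_one_mul_self_mul_self (s := r) (by linarith) (w y)
  rw [add_comm r 1] at h
  linear_combination (-k) * h

theorem abs_rpow_le_mul_sqrt_integral_mul_sqrt_integral {a b p : ℝ} (hp : 1 < p)
    {w w' : ℝ → ℝ} (hw : ∀ x ∈ Icc a b, HasDerivAt w (w' x) x)
    (hw'c : ContinuousOn w' (Icc a b)) (ha : w a = 0) {y : ℝ} (hy : y ∈ Icc a b) :
    |w y| ^ p ≤ p * (√(∫ x in a..b, |w x| ^ (2 * (p - 1))) * √(∫ x in a..b, w' x ^ 2)) := by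
  have hab : a ≤ b := hy.1.trans hy.2
  have hwc : ContinuousOn w (Icc a b) := HasDerivAt.continuousOn hw
  set φ : ℝ → ℝ := fun x => |w x| ^ (p - 1) * |w' x|
  have hφc : ContinuousOn φ (Icc a b) :=
    (hwc.abs.rpow_const fun _ _ => Or.inr (by linarith)).mul hw'c.abs
  have hsub : Icc a y ⊆ Icc a b := Icc_subset_Icc_right hy.2
  have hFTC : |w y| ^ p - |w a| ^ p ≤ ∫ x in a..y, p * φ x :=
    intervalIntegral.sub_le_integral_of_hasDeriv_right_of_le hy.1
      ((hwc.mono hsub).abs.rpow_const fun _ _ => Or.inr (by linarith))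
      (fun x hx => ((hasDerivAt_abs_rpow (w x) hp).comp x
        (hw x (hsub (Ioo_subset_Icc_self hx)))).hasDerivWithinAt)
      ((continuousOn_const.mul (hφc.mono hsub)).integrableOn_Icc)
      (fun x _ => by
        simpa only [mul_assoc] using mul_le_mul_of_nonneg_left
          (abs_rpow_sub_two_mul_self_mul_le hp (w x) (w' x)) (by linarith : (0:ℝ) ≤ p))
  have hmono : ∫ x in a..y, φ x ≤ ∫ x in a..b, φ x :=
    intervalIntegral.integral_mono_interval le_rfl hy.1 hy.2
      (Filter.Eventually.of_forall fun x => by positivity)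
      (hφc.intervalIntegrable_of_Icc hab)
  have hCS : ∫ x in a..b, φ x ≤
      √(∫ x in a..b, (|w x| ^ (p - 1)) ^ 2) * √(∫ x in a..b, |w' x| ^ 2) :=
    intervalIntegral.integral_mul_le_sqrt_mul_sqrt hab
      (hwc.abs.rpow_const fun _ _ => Or.inr (by linarith)).memLp_two_restrict_Ioc
      hw'c.abs.memLp_two_restrict_Ioc
  have hsq : ∀ x, (|w x| ^ (p - 1)) ^ 2 = |w x| ^ (2 * (p - 1)) := fun x => by
    rw [← Real.rpow_natCast, ← Real.rpow_mul (abs_nonneg _)]; ring_nf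
  simp only [hsq, sq_abs] at hCS
  rw [ha, abs_zero, Real.zero_rpow (by linarith), sub_zero,
    intervalIntegral.integral_const_mul] at hFTC
  calc |w y| ^ p ≤ p * ∫ x in a..y, φ x := hFTC
    _ ≤ p * ∫ x in a..b, φ x := by gcongr
    _ ≤ _ := by gcongr

theorem exists_sqrt_integral_sq_le {a b : ℝ} (hab : a ≤ b) {w : ℝ → ℝ}
    (hw : ContinuousOn w (Icc a b)) :
    ∃ y ∈ Icc a b, √(∫ x in a..b, w x ^ 2) ≤ √(b - a) * |w y| := by
  obtain ⟨y, hy, hmax⟩ :=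
    isCompact_Icc.exists_isMaxOn (nonempty_Icc.2 hab) (continuous_abs.comp_continuousOn hw)
  refine ⟨y, hy, ?_⟩
  have hle : ∫ x in a..b, w x ^ 2 ≤ ∫ _ in a..b, |w y| ^ 2 :=
    intervalIntegral.integral_mono_on hab ((hw.pow 2).intervalIntegrable_of_Icc hab)
      intervalIntegrable_const fun x hx => by
        rw [sq_abs]; exact sq_le_sq.2 (hmax hx)
  rw [intervalIntegral.integral_const, smul_eq_mul] at hle
  calc √(∫ x in a..b, w x ^ 2) ≤ √((b - a) * |w y| ^ 2) := Real.sqrt_le_sqrt hle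
    _ = √(b - a) * |w y| := by rw [Real.sqrt_mul' _ (sq_nonneg _), Real.sqrt_sq (abs_nonneg _)]

theorem sqrt_integral_sq_rpow_le {p : ℝ} (hp : 1 < p) {w w' : ℝ → ℝ}
    (hw : ∀ x ∈ Icc (0 : ℝ) 1, HasDerivAt w (w' x) x)
    (hw'c : ContinuousOn w' (Icc 0 1)) (h0 : w 0 = 0) :
    √(∫ x in (0 : ℝ)..1, w x ^ 2) ^ p ≤
      p * (√(∫ x in (0 : ℝ)..1, |w x| ^ (2 * (p - 1))) * √(∫ x in (0 : ℝ)..1, w' x ^ 2)) := by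
  obtain ⟨y, hy, hle⟩ := exists_sqrt_integral_sq_le zero_le_one (HasDerivAt.continuousOn hw)
  rw [sub_zero, Real.sqrt_one, one_mul] at hle
  exact (Real.rpow_le_rpow (Real.sqrt_nonneg _) hle (by linarith)).trans
    (abs_rpow_le_mul_sqrt_integral_mul_sqrt_integral hp hw hw'c h0 hy)

theorem structural_condition_parabolic (k r ε : ℝ) (hk : 0 < k)
    (hr : r ∈ Set.Ioo (0 : ℝ) 1) (hε : 0 < ε) (hε' : ε < 1 / (2 * Real.sqrt k))
    (w w' w'' f : ℝ → ℝ)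
    (hw : ∀ y ∈ Set.Icc (0 : ℝ) 1, HasDerivAt w (w' y) y)
    (hw' : ∀ y ∈ Set.Icc (0 : ℝ) 1, HasDerivAt w' (w'' y) y)
    (hw''int : IntervalIntegrable w'' volume 0 1)
    (hbc0 : w 0 = 0) (hbc1 : w' 1 = 0)
    (hfm : Measurable f)
    (hf2 : IntervalIntegrable (fun y => (f y) ^ 2) volume 0 1) :
    2 * (∫ y in (0:ℝ)..1, w'' y * w y) +
        2 * (∫ y in (0:ℝ)..1, (-k * |w y| ^ (r - 1) * w y + f y) * w y) ≤
      -(16 * k * ε / (3 + r)) *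
          (Real.sqrt (∫ y in (0:ℝ)..1, (w y) ^ 2)) ^ ((3 + r) / 2) +
        2 * Real.sqrt (∫ y in (0:ℝ)..1, (f y) ^ 2) *
          Real.sqrt (∫ y in (0:ℝ)..1, (w y) ^ 2) := by
  obtain ⟨hr0, hr1⟩ := hr
  have hwc : ContinuousOn w (Icc 0 1) := HasDerivAt.continuousOn hw
  have hf : MemLp f 2 (volume.restrict (Ioc 0 1)) :=
    (memLp_two_iff_integrable_sq hfm.aestronglyMeasurable).2
      ((intervalIntegrable_iff_integrableOn_Ioc_of_le zero_le_one).1 hf2)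
  set B := ∫ y in (0:ℝ)..1, w' y ^ 2
  set C := ∫ y in (0:ℝ)..1, |w y| ^ (1 + r)
  set S := √(∫ y in (0:ℝ)..1, w y ^ 2)
  have hsource : ∫ y in (0:ℝ)..1, f y * w y ≤ √(∫ y in (0:ℝ)..1, f y ^ 2) * S :=
    intervalIntegral.integral_mul_le_sqrt_mul_sqrt zero_le_one hf hwc.memLp_two_restrict_Ioc
  have hinterp : S ^ ((3 + r) / 2) ≤ (3 + r) / 2 * (√C * √B) := by
    have h := sqrt_integral_sq_rpow_le (p := (3 + r) / 2) (by linarith) hw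
      (HasDerivAt.continuousOn hw') hbc0
    rwa [show 2 * ((3 + r) / 2 - 1) = 1 + r by ring] at h
  have hyoung := four_mul_mul_mul_le_sq_add hk.le (four_mul_mul_sq_lt_one hk hε.le hε').le (√B) (√C)
  rw [Real.sq_sqrt (intervalIntegral.integral_nonneg zero_le_one fun _ _ => sq_nonneg _),
    Real.sq_sqrt (intervalIntegral.integral_nonneg zero_le_one fun _ _ => by positivity)] at hyoung
  have habsorb : 16 * k * ε / (3 + r) * S ^ ((3 + r) / 2) ≤ 2 * B + 2 * k * C :=
    calc _ ≤ 16 * k * ε / (3 + r) * ((3 + r) / 2 * (√C * √B)) := by gcongr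
      _ = 2 * (4 * k * ε * √B * √C) := by field_simp; ring
      _ ≤ _ := by linarith
  rw [integral_deriv_deriv_mul_eq_neg_integral_sq zero_le_one hw hw' hw''int hbc0 hbc1,
    integral_reaction_mul_eq zero_le_one (by linarith) hwc hf]
  linarith
end
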